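/- For n ≥ 2, the following identity holds in B_n(ω) ⊗_F F(u_1,…,u_n): (1 − e_{1,n}/(u_1+u_n))(1 − e_{2,n}/(u_2+u_n))⋯(1 − e_{n−1,n}/(u_{n−1}+u_n)) · ∏_{1≤i<j≤n−1}(1 − s_{ij}/(u_i−u_j)) = ∏_{1≤i<j≤n−1}(1 − s_{ij}/(u_i−u_j)) · (1 − e_{n−1,n}/(u_{n−1}+u_n))(1 − e_{n−2,n}/(u_{n−2}+u_n))⋯(1 − e_{1,n}/(u_1+u_n)), where the products over pairs (i,j) are taken in lexicographic order. -/

import Mathlib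

/-!
Common definitions for the fusion procedure for the Brauer algebra
(Isaev–Molev, "Fusion procedure for the Brauer algebra").
-/

noncomputable section
open scoped BigOperators
open Classical

namespace BrauerFusion

/-- The base field `F = ℂ(ω)`. -/
abbrev F : Type := RatFunc ℂ

/-- The indeterminate `ω ∈ ℂ(ω)`. -/
def ωF : F := RatFunc.X

/-- `s e : ℕ → A` satisfy the defining relations of the Brauer algebra `B_n(ω)`
over the commutative base `R`; here `s i`, `e i` represent the generators
`s_i`, `e_i` for `1 ≤ i ≤ n - 1` (values at other indices are irrelevant). -/
structure IsBrauer {R : Type*} {A : Type*} [CommRing R] [Ring A] [Algebra R A]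
    (n : ℕ) (ω : R) (s e : ℕ → A) : Prop where
  ss : ∀ i, 1 ≤ i → i + 1 ≤ n → s i * s i = 1
  ee : ∀ i, 1 ≤ i → i + 1 ≤ n → e i * e i = ω • e i
  se : ∀ i, 1 ≤ i → i + 1 ≤ n → s i * e i = e i
  es : ∀ i, 1 ≤ i → i + 1 ≤ n → e i * s i = e i
  ss_comm : ∀ i j, 1 ≤ i → j + 1 ≤ n → i + 1 < j → s i * s j = s j * s i
  ee_comm : ∀ i j, 1 ≤ i → j + 1 ≤ n → i + 1 < j → e i * e j = e j * e i
  se_comm : ∀ i j, 1 ≤ i → j + 1 ≤ n → i + 1 < j → s i * e j = e j * s i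
  es_comm : ∀ i j, 1 ≤ i → j + 1 ≤ n → i + 1 < j → s j * e i = e i * s j
  braid : ∀ i, 1 ≤ i → i + 2 ≤ n → s i * s (i+1) * s i = s (i+1) * s i * s (i+1)
  eee₁ : ∀ i, 1 ≤ i → i + 2 ≤ n → e i * e (i+1) * e i = e i
  eee₂ : ∀ i, 1 ≤ i → i + 2 ≤ n → e (i+1) * e i * e (i+1) = e (i+1)
  see : ∀ i, 1 ≤ i → i + 2 ≤ n → s i * e (i+1) * e i = s (i+1) * e i
  ees : ∀ i, 1 ≤ i → i + 2 ≤ n → e (i+1) * e i * s (i+1) = e (i+1) * s i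

variable {A : Type*} [Ring A]

/-- The transposition `s_{ij} = s_i s_{i+1} ⋯ s_{j-2} s_{j-1} s_{j-2} ⋯ s_{i+1} s_i`
(for `i < j`), defined by `s_{i,i+1} = s_i` and `s_{ij} = s_i s_{i+1,j} s_i`. -/
def sij (s : ℕ → A) (i j : ℕ) : A :=
  if h : i + 1 < j then s i * sij s (i+1) j * s i else s i
termination_by j - i
decreasing_by omega

/-- The element `e_{ij} = s_{i,j-1} e_{j-1} s_{i,j-1}` (for `i < j`), with `e_{i,i+1} = e_i`. -/
def eij (s e : ℕ → A) (i j : ℕ) : A :=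
  if i + 1 < j then sij s i (j-1) * e (j-1) * sij s i (j-1) else e i

/-- `x_j^{(m)} = (ω-1)/2 + ∑_{r=1}^{j-1} (s_{rm} - e_{rm})`. -/
def jmM {R : Type*} [Field R] [Algebra R A] (ω : R) (s e : ℕ → A) (j m : ℕ) : A :=
  algebraMap R A ((ω - 1) / 2) + ∑ r ∈ Finset.Icc 1 (j-1), (sij s r m - eij s e r m)

/-- The Jucys–Murphy element `x_r = (ω-1)/2 + ∑_{k=1}^{r-1} (s_{kr} - e_{kr})`. -/
def jm {R : Type*} [Field R] [Algebra R A] (ω : R) (s e : ℕ → A) (r : ℕ) : A :=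
  jmM ω s e r r

/-- The pairs `(i, j)` with `1 ≤ i < j ≤ n` in lexicographic order. -/
def lexPairs (n : ℕ) : List (ℕ × ℕ) :=
  (List.range' 1 n).flatMap fun i =>
    ((List.range' 1 n).filter fun j => decide (i < j)).map fun j => (i, j)

/-- The rational function
`Ψ(u_1,…,u_n) = ∏_{1≤i<j≤n} (1 - e_{ij}/(u_i+u_j)) ∏_{1≤i<j≤n} (1 - s_{ij}/(u_i-u_j))`,
with ordered products over the pairs `(i,j)` in lexicographic order. -/
def Psi {K : Type*} [Field K] [Algebra K A] (s e : ℕ → A) (n : ℕ) (u : ℕ → K) : A :=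
  ((lexPairs n).map fun p => 1 - (u p.1 + u p.2)⁻¹ • eij s e p.1 p.2).prod *
  ((lexPairs n).map fun p => 1 - (u p.1 - u p.2)⁻¹ • sij s p.1 p.2).prod

/-- An updown tableau of length `n`: a sequence of Young diagrams
`Λ_0 = ∅, Λ_1, …, Λ_n` in which `Λ_r` is obtained from `Λ_{r-1}` by adding
(`add r = true`) or removing (`add r = false`) the box `box r`. -/
structure UpDownTableau (n : ℕ) where
  shape : ℕ → YoungDiagram
  box : ℕ → ℕ × ℕ
  add : ℕ → Bool
  shape_zero : shape 0 = ⊥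
  step_add : ∀ r, 1 ≤ r → r ≤ n → add r = true →
    box r ∉ shape (r-1) ∧ (shape r).cells = insert (box r) (shape (r-1)).cells
  step_rem : ∀ r, 1 ≤ r → r ≤ n → add r = false →
    box r ∉ shape r ∧ (shape (r-1)).cells = insert (box r) (shape r).cells

/-- The content `c_r` of an updown tableau: `(ω-1)/2 + j - i` if the box `(i,j)` was
added at step `r`, and `-((ω-1)/2 + j - i)` if it was removed. -/
def content {R : Type*} [Field R] (ω : R) {n : ℕ} (T : UpDownTableau n) (r : ℕ) : R :=
  if T.add r then (ω - 1) / 2 + ((T.box r).2 : R) - ((T.box r).1 : R)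
  else -((ω - 1) / 2 + ((T.box r).2 : R) - ((T.box r).1 : R))

/-- The content attached to a box `b` which can be removed from (`b ∈ μ`) or
added to (`b ∉ μ`) the diagram `μ`. -/
def boxContent {R : Type*} [Field R] (ω : R) (μ : YoungDiagram) (b : ℕ × ℕ) : R :=
  if b ∈ μ then -((ω - 1) / 2 + (b.2 : R) - (b.1 : R))
  else (ω - 1) / 2 + (b.2 : R) - (b.1 : R)

/-- All boxes `(i,j)` with `i, j < N`, listed in lexicographic order. -/
def gridList (N : ℕ) : List (ℕ × ℕ) :=
  (List.range N).flatMap fun i => (List.range N).map fun j => (i, j)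

/-- A box which can be added to, or removed from, the Young diagram `μ`
so that the result is again a Young diagram. -/
def isCandidate (μ : YoungDiagram) (b : ℕ × ℕ) : Prop :=
  (b ∉ μ ∧ ∃ ν : YoungDiagram, ν.cells = insert b μ.cells) ∨
  (b ∈ μ ∧ ∃ ν : YoungDiagram, μ.cells = insert b ν.cells)

/-- The list of all boxes which can be added to or removed from `μ`. -/
def candList (μ : YoungDiagram) : List (ℕ × ℕ) :=
  (gridList (μ.card + 2)).filter fun b => decide (isCandidate μ b)

/-- The primitive idempotent `E_{(Λ_1,…,Λ_r)}`, defined recursively by `E = 1` for `r = 0`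
and `E_T = E_U ∏_a (x_r - a)/(c_r - a)`, the product over the contents `a` of all boxes
(other than the box of step `r`) which can be added to or removed from `Λ_{r-1}`. -/
def idem {R : Type*} [Field R] [Algebra R A] (ω : R) (s e : ℕ → A) {n : ℕ}
    (T : UpDownTableau n) : ℕ → A
  | 0 => 1
  | r + 1 =>
    idem ω s e T r *
      (((candList (T.shape r)).filter (fun b => decide (b ≠ T.box (r+1)))).map fun b =>
        (content ω T (r+1) - boxContent ω (T.shape r) b)⁻¹ •
          (jm ω s e (r+1) - algebraMap R A (boxContent ω (T.shape r) b))).prod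

/-- `d_k` : the number of steps among the first `len` steps of `T` adding a box
on the diagonal `k`. -/
def dAdd {n : ℕ} (T : UpDownTableau n) (len : ℕ) (k : ℤ) : ℤ :=
  (((Finset.Icc 1 len).filter fun t =>
    T.add t = true ∧ ((T.box t).2 : ℤ) - ((T.box t).1 : ℤ) = k).card : ℤ)

/-- `d'_k` : the number of steps among the first `len` steps of `T` removing a box
on the diagonal `k`. -/
def dRem {n : ℕ} (T : UpDownTableau n) (len : ℕ) (k : ℤ) : ℤ :=
  (((Finset.Icc 1 len).filter fun t =>
    T.add t = false ∧ ((T.box t).2 : ℤ) - ((T.box t).1 : ℤ) = k).card : ℤ)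

/-- `g_k = δ_{k0} + d_{k-1} + d_{k+1} - 2 d_k`. -/
def gAdd {n : ℕ} (T : UpDownTableau n) (len : ℕ) (k : ℤ) : ℤ :=
  (if k = 0 then 1 else 0) + dAdd T len (k-1) + dAdd T len (k+1) - 2 * dAdd T len k

/-- `g'_k = d'_{k-1} + d'_{k+1} - 2 d'_k`. -/
def gRem {n : ℕ} (T : UpDownTableau n) (len : ℕ) (k : ℤ) : ℤ :=
  dRem T len (k-1) + dRem T len (k+1) - 2 * dRem T len k

/-- The diagonal `j - i` of the box of step `r`. -/
def diagOf {n : ℕ} (T : UpDownTableau n) (r : ℕ) : ℤ :=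
  ((T.box r).2 : ℤ) - ((T.box r).1 : ℤ)

/-- The exponent `p_r` of an updown tableau: `p_r = 1 - g_{k_r}` if a box is added on the
diagonal `k_r` at step `r`, and `p_r = 1 - g'_{k_r}` if a box is removed, where `g, g'`
are computed from the first `r - 1` steps. -/
def pExp {n : ℕ} (T : UpDownTableau n) (r : ℕ) : ℤ :=
  1 - (if T.add r then gAdd T (r-1) (diagOf T r) else gRem T (r-1) (diagOf T r))

/-- The factor `φ(U, T)` in the recursive definition of `f(T)`; the products over all
integers `k` are realized as products over `-r-1 ≤ k ≤ r+1`, which contains the support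
of `g` and `g'` (all other factors are equal to 1). -/
def phiStep {n : ℕ} (T : UpDownTableau n) (r : ℕ) : F :=
  if T.add r then
    (∏ k ∈ (Finset.Icc (-(r:ℤ)-1) ((r:ℤ)+1)).erase (diagOf T r),
      ((diagOf T r - k : ℤ) : F) ^ gAdd T (r-1) k) *
    ∏ k ∈ Finset.Icc (-(r:ℤ)-1) ((r:ℤ)+1),
      (((diagOf T r + k : ℤ) : F) + ωF - 1) ^ gRem T (r-1) k
  else
    (∏ k ∈ (Finset.Icc (-(r:ℤ)-1) ((r:ℤ)+1)).erase (diagOf T r),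
      ((k - diagOf T r : ℤ) : F) ^ gRem T (r-1) k) *
    ∏ k ∈ Finset.Icc (-(r:ℤ)-1) ((r:ℤ)+1),
      ((1 : F) - ωF - ((diagOf T r + k : ℤ) : F)) ^ gAdd T (r-1) k

/-- The scalar `f(T) ∈ ℂ(ω)`, defined recursively by `f(∅) = 1`, `f(T) = f(U) φ(U,T)`. -/
def fT {n : ℕ} (T : UpDownTableau n) : ℕ → F
  | 0 => 1
  | r + 1 => fT T r * phiStep T (r+1)

/-- The hook length of the box `b` in the Young diagram `μ`. -/
def hookLength (μ : YoungDiagram) (b : ℕ × ℕ) : ℕ :=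
  (μ.cells.filter fun c => c.1 = b.1 ∧ b.2 < c.2).card +
  (μ.cells.filter fun c => c.2 = b.2 ∧ b.1 < c.1).card + 1

/-- The product of the hook lengths of all boxes of `μ`. -/
def hookProd (μ : YoungDiagram) : ℕ :=
  ∏ b ∈ μ.cells, hookLength μ b

/-- Polynomials in the variables `u_1, u_2, …` over `F = ℂ(ω)`. -/
abbrev MvP : Type := MvPolynomial ℕ F

/-- The field `F(u_1, u_2, …)` of rational functions in the variables `u_r` over `ℂ(ω)`. -/
abbrev KK : Type := FractionRing MvP

/-- Substituting `u_r = c` into a polynomial in the `u`'s. -/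
def substOne (r : ℕ) (c : F) : MvP →ₐ[F] MvP :=
  MvPolynomial.aeval fun t => if t = r then MvPolynomial.C c else MvPolynomial.X t

/-- The variable `u_r` as an element of `KK`. -/
def uVar (r : ℕ) : KK := algebraMap MvP KK (MvPolynomial.X r)

/-- A constant (an element of `ℂ(ω)`) as an element of `KK`. -/
def cK (x : F) : KK := algebraMap MvP KK (MvPolynomial.C x)

/-- The element `ω` of `KK`. -/
def ωK : KK := cK ωF

/-- `RegK r c f v` : the rational function `f ∈ F(u_1, u_2, …)`, viewed as a rational
function of the variable `u_r`, is regular at `u_r = c`, with value `v` there. -/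
def RegK (r : ℕ) (c : F) (f v : KK) : Prop :=
  ∃ p q : MvP, substOne r c q ≠ 0 ∧
    f = algebraMap MvP KK p / algebraMap MvP KK q ∧
    v = algebraMap MvP KK (substOne r c p) / algebraMap MvP KK (substOne r c q)

/-- The subring of "constants": the subring generated by the `s_i`, `e_i` and the
scalars from `ℂ(ω)` (i.e. the copy of the Brauer algebra `B_n(ω)` inside `B_n(ω) ⊗ KK`). -/
def constSubK [Algebra KK A] (s e : ℕ → A) : Subring A :=
  Subring.closure (Set.range s ∪ Set.range e ∪ Set.range fun x : F => algebraMap KK A (cK x))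

/-- `RegStep s e r c a v` : the element `a` of `B ⊗ F(u_1,…,u_n)`, viewed as a rational
function of `u_r`, is regular at `u_r = c` with value `v`: it can be written as a finite sum
`a = ∑ f_i • b_i` with constant `b_i` and coordinates `f_i` regular at `u_r = c` (denominators
not vanishing at `u_r = c`), whose values at `u_r = c` give `v = ∑ f_i(c) • b_i`. -/
def RegStep [Algebra KK A] (s e : ℕ → A) (r : ℕ) (c : F) (a v : A) : Prop :=
  ∃ (m : ℕ) (f g : Fin m → KK) (b : Fin m → A),
    (∀ i, RegK r c (f i) (g i)) ∧ (∀ i, b i ∈ constSubK s e) ∧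
    a = ∑ i, f i • b i ∧ v = ∑ i, g i • b i

end BrauerFusion

/-!
Write `F_k = 1 - e_{k,n}/(u_k+u_n)` and `G_{ij} = 1 - s_{ij}/(u_i-u_j)`. Conjugation by `s_{ij}`
permutes the `e_{k,n}` by the transposition `(i j)`, so `G_{ij}` commutes with `F_k` for
`k ≠ i, j`; together with `e_{j,n} s_{ij} e_{j,n} = e_{j,n}` and the partial-fraction identity
`1/((u_i+u_n)(u_j+u_n)) + 1/((u_i-u_j)(u_i+u_n)) = 1/((u_i-u_j)(u_j+u_n))` it also gives the
braid-type relation `F_i F_j G_{ij} = G_{ij} F_j F_i`. These two relations alone carry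
`F_1 ⋯ F_{n-1}` through the lexicographic product, one row `G_{i,i+1} ⋯ G_{i,n-1}` at a time,
reversing the order of the `F`'s.
-/

namespace BrauerFusion

def orderedPairs : List ℕ → List (ℕ × ℕ)
  | [] => []
  | a :: l => l.map (a, ·) ++ orderedPairs l

theorem orderedPairs_eq_flatMap_filter {l : List ℕ} (hl : l.Pairwise (· < ·)) :
    orderedPairs l = l.flatMap fun i => (l.filter fun j => decide (i < j)).map fun j => (i, j) := by
  induction l with
  | nil => rfl
  | cons a l ih =>
    rw [List.pairwise_cons] at hl
    have hfilter : ∀ i ∈ a :: l, ((a :: l).filter fun j => decide (i < j)) =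
        l.filter fun j => decide (i < j) := by
      intro i hi
      rcases List.mem_cons.mp hi with rfl | hi
      · simp
      · simp [(hl.1 i hi).asymm]
    rw [List.flatMap_congr fun i hi => by rw [hfilter i hi], List.flatMap_cons,
      List.filter_eq_self.mpr (by simpa using hl.1), orderedPairs, ih hl.2]

theorem lexPairs_eq_orderedPairs (n : ℕ) : lexPairs n = orderedPairs (List.range' 1 n) :=
  (orderedPairs_eq_flatMap_filter List.pairwise_lt_range').symm

theorem of_mem_orderedPairs {l : List ℕ} (hl : l.Pairwise (· < ·)) {p : ℕ × ℕ}
    (hp : p ∈ orderedPairs l) : p.1 ∈ l ∧ p.2 ∈ l ∧ p.1 < p.2 := by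
  induction l with
  | nil => simp [orderedPairs] at hp
  | cons a l ih =>
    rw [List.pairwise_cons] at hl
    simp only [orderedPairs, List.mem_append, List.mem_map] at hp
    rcases hp with ⟨b, hb, rfl⟩ | hp
    · exact ⟨List.mem_cons_self, List.mem_cons_of_mem _ hb, hl.1 b hb⟩
    · obtain ⟨h1, h2, h3⟩ := ih hl.2 hp
      exact ⟨List.mem_cons_of_mem _ h1, List.mem_cons_of_mem _ h2, h3⟩

section OrderedProducts

variable {M : Type*} [Monoid M] {f : ℕ → M} {g : ℕ → ℕ → M} {S : Set ℕ}
  (hcomm : ∀ i ∈ S, ∀ j ∈ S, ∀ k ∈ S, i < j → k ≠ i → k ≠ j → Commute (g i j) (f k))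
  (hswap : ∀ i ∈ S, ∀ j ∈ S, i < j → f i * f j * g i j = g i j * f j * f i)
include hcomm hswap

theorem mul_prod_mul_prod_eq_prod_mul_prod_mul {a : ℕ} (ha : a ∈ S) {l : List ℕ}
    (hlS : ∀ b ∈ l, b ∈ S) (hl : l.Pairwise (· < ·)) (hal : ∀ b ∈ l, a < b) :
    f a * (l.map f).prod * (l.map (g a)).prod = (l.map (g a)).prod * (l.map f).prod * f a := by
  induction l with
  | nil => simp
  | cons b l ih =>
    simp only [List.forall_mem_cons, List.pairwise_cons] at hlS hl hal
    have hFg : Commute (l.map f).prod (g a b) := Commute.list_prod_left _ _ fun x hx => by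
      obtain ⟨k, hk, rfl⟩ := List.mem_map.mp hx
      exact (hcomm a ha b hlS.1 k (hlS.2 k hk) hal.1 (hal.2 k hk).ne' (hl.1 k hk).ne').symm
    have hfG : Commute (f b) (l.map (g a)).prod := Commute.list_prod_right _ _ fun x hx => by
      obtain ⟨j, hj, rfl⟩ := List.mem_map.mp hx
      exact (hcomm a ha j (hlS.2 j hj) b hlS.1 (hal.2 j hj) hal.1.ne' (hl.1 j hj).ne).symm
    have ih' := ih hlS.2 hl.2 hal.2
    simp only [List.map_cons, List.prod_cons]
    calc f a * (f b * (l.map f).prod) * (g a b * (l.map (g a)).prod)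
        = f a * f b * g a b * ((l.map f).prod * (l.map (g a)).prod) := by
          simp only [mul_assoc, hFg.left_comm]
      _ = g a b * f b * (f a * (l.map f).prod * (l.map (g a)).prod) := by
          rw [hswap a ha b hlS.1 hal.1]; simp only [mul_assoc]
      _ = g a b * (l.map (g a)).prod * (f b * (l.map f).prod) * f a := by
          rw [ih']; simp only [mul_assoc, hfG.left_comm]

theorem prod_mul_prod_orderedPairs {l : List ℕ} (hlS : ∀ b ∈ l, b ∈ S)
    (hl : l.Pairwise (· < ·)) :
    (l.map f).prod * ((orderedPairs l).map fun p => g p.1 p.2).prod =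
      ((orderedPairs l).map fun p => g p.1 p.2).prod * (l.reverse.map f).prod := by
  induction l with
  | nil => simp [orderedPairs]
  | cons a l ih =>
    simp only [List.forall_mem_cons, List.pairwise_cons] at hlS hl
    have hfP : Commute (f a) ((orderedPairs l).map fun p => g p.1 p.2).prod :=
      Commute.list_prod_right _ _ fun x hx => by
        obtain ⟨p, hp, rfl⟩ := List.mem_map.mp hx
        obtain ⟨h1, h2, h12⟩ := of_mem_orderedPairs hl.2 hp
        exact (hcomm _ (hlS.2 _ h1) _ (hlS.2 _ h2) a hlS.1 h12 (hl.1 _ h1).ne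
          (hl.1 _ h2).ne).symm
    have hrow := mul_prod_mul_prod_eq_prod_mul_prod_mul hcomm hswap hlS.1 hlS.2 hl.2 hl.1
    simp only [orderedPairs, List.map_append, List.map_map, List.prod_append, List.map_cons,
      List.prod_cons, List.reverse_cons, List.map_nil, List.prod_nil, mul_one]
    set P := ((orderedPairs l).map fun p => g p.1 p.2).prod
    calc f a * (l.map f).prod * ((l.map (g a)).prod * P)
        = f a * (l.map f).prod * (l.map (g a)).prod * P := by simp only [mul_assoc]
      _ = (l.map (g a)).prod * ((l.map f).prod * P) * f a := by
          rw [hrow]; simp only [mul_assoc, hfP.eq]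
      _ = (l.map (g a)).prod * P * ((l.reverse.map f).prod * f a) := by
          rw [ih hlS.2 hl.2]; simp only [mul_assoc]

end OrderedProducts

theorem one_sub_smul_braid {K A : Type*} [CommRing K] [Ring A] [Algebra K A] {X E E' : A}
    (hX : X * X = 1) (hconj : X * E' * X = E) (hE' : E' * X * E' = E') {x y z : K}
    (hxyz : x * y + z * x = z * y) :
    (1 - x • E) * (1 - y • E') * (1 - z • X) = (1 - z • X) * (1 - y • E') * (1 - x • E) := by
  have r1 : E * X = X * E' := by rw [← hconj, mul_assoc, hX, mul_one]
  have r2 : X * E = E' * X := by rw [← hconj, ← mul_assoc, ← mul_assoc, hX, one_mul]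
  have r3 : E * E' = X * E' := by rw [← hconj, mul_assoc, mul_assoc, ← mul_assoc E', hE']
  have r4 : E' * E = E' * X := by rw [← hconj, ← mul_assoc, ← mul_assoc, hE']
  have r5 : X * E' * E = E := by rw [mul_assoc, r4, ← mul_assoc, hconj]
  rw [← sub_eq_zero]
  calc (1 - x • E) * (1 - y • E') * (1 - z • X) - (1 - z • X) * (1 - y • E') * (1 - x • E)
      = (x * y + z * x - z * y) • (X * E' - E' * X) := by
        simp only [mul_sub, sub_mul, mul_one, one_mul, smul_mul_assoc, mul_smul_comm]
        rw [r3, r1, r2, r4, hconj, r5]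
        module
    _ = 0 := by rw [hxyz, sub_self, zero_smul]

section Unfold

variable {A : Type*} [Ring A] (s e : ℕ → A)

theorem sij_add_one (i : ℕ) : sij s i (i + 1) = s i := by
  rw [sij, dif_neg (lt_irrefl _)]

theorem sij_of_lt {i j : ℕ} (h : i + 1 < j) : sij s i j = s i * sij s (i + 1) j * s i := by
  rw [sij, dif_pos h]

theorem eij_add_one (i : ℕ) : eij s e i (i + 1) = e i := by
  rw [eij, if_neg (lt_irrefl _)]

theorem eij_of_lt {i j : ℕ} (h : i + 1 < j) :
    eij s e i j = sij s i (j - 1) * e (j - 1) * sij s i (j - 1) := by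
  rw [eij, if_pos h]

end Unfold

namespace IsBrauer

variable {R A : Type*} [CommRing R] [Ring A] [Algebra R A] {n : ℕ} {ω : R} {s e : ℕ → A}
  (hB : IsBrauer n ω s e)
include hB

theorem commute_s_s {m k : ℕ} (hm : 1 ≤ m) (hmn : m + 1 ≤ n) (hk : 1 ≤ k) (hkn : k + 1 ≤ n)
    (h : m + 1 < k ∨ k + 1 < m) : Commute (s m) (s k) := by
  rcases h with h | h
  · exact hB.ss_comm m k hm hkn h
  · exact (hB.ss_comm k m hk hmn h).symm

theorem commute_s_e {m k : ℕ} (hm : 1 ≤ m) (hmn : m + 1 ≤ n) (hk : 1 ≤ k) (hkn : k + 1 ≤ n)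
    (h : m + 1 < k ∨ k + 1 < m) : Commute (s m) (e k) := by
  rcases h with h | h
  · exact hB.se_comm m k hm hkn h
  · exact hB.es_comm k m hk hmn h

theorem sij_mul_self {i j : ℕ} (hi : 1 ≤ i) (hij : i < j) (hjn : j ≤ n) :
    sij s i j * sij s i j = 1 := by
  have hss := hB.ss i hi (by omega)
  by_cases h : i + 1 < j
  · have ih := sij_mul_self (by omega : 1 ≤ i + 1) h hjn
    calc sij s i j * sij s i j
        = s i * (sij s (i + 1) j * (s i * s i) * sij s (i + 1) j) * s i := by
          simp only [sij_of_lt s h, mul_assoc]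
      _ = 1 := by rw [hss, mul_one, ih, mul_one, hss]
  · obtain rfl : j = i + 1 := by omega
    rw [sij_add_one, hss]
termination_by j - i

theorem eij_eq_s_mul_eij_mul_s {k : ℕ} (hk : 1 ≤ k) (hkn : k + 2 ≤ n) :
    eij s e k n = s k * eij s e (k + 1) n * s k := by
  rw [eij_of_lt s e (by omega : k + 1 < n)]
  by_cases h : k + 2 < n
  · have hcomm : Commute (s k) (e (n - 1)) :=
      hB.commute_s_e hk (by omega) (by omega) (by omega) (Or.inl (by omega))
    calc sij s k (n - 1) * e (n - 1) * sij s k (n - 1)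
        = s k * (sij s (k + 1) (n - 1) * (s k * e (n - 1) * s k) * sij s (k + 1) (n - 1))
            * s k := by
          simp only [sij_of_lt s (by omega : k + 1 < n - 1), mul_assoc]
      _ = s k * eij s e (k + 1) n * s k := by
          rw [hcomm.eq, mul_assoc (e (n - 1)), hB.ss k hk (by omega), mul_one,
            eij_of_lt s e (by omega : k + 1 + 1 < n)]
  · obtain rfl : n = k + 2 := by omega
    rw [show k + 2 - 1 = k + 1 by omega, sij_add_one, eij_add_one]

theorem commute_s_eij {m k : ℕ} (hm : 1 ≤ m) (hmn : m + 2 ≤ n) (hk : 1 ≤ k) (hkn : k + 1 ≤ n)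
    (hkm : k ≠ m) (hkm' : k ≠ m + 1) : Commute (s m) (eij s e k n) := by
  by_cases hkn' : k + 2 ≤ n
  · rw [hB.eij_eq_s_mul_eij_mul_s hk hkn']
    by_cases hmk : m = k + 1
    · subst hmk
      have hbraid := hB.braid k hk (by omega)
      have hE : Commute (s k) (eij s e (k + 2) n) :=
        commute_s_eij hk (by omega) (by omega) (by omega) (by omega) (by omega)
      rw [hB.eij_eq_s_mul_eij_mul_s (by omega : 1 ≤ k + 1) (by omega)]
      calc s (k + 1) * (s k * (s (k + 1) * eij s e (k + 2) n * s (k + 1)) * s k)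
          = s (k + 1) * s k * s (k + 1) * eij s e (k + 2) n * (s (k + 1) * s k) := by
            simp only [mul_assoc]
        _ = s k * s (k + 1) * (s k * eij s e (k + 2) n) * (s (k + 1) * s k) := by
            rw [← hbraid]; simp only [mul_assoc]
        _ = s k * s (k + 1) * eij s e (k + 2) n * (s k * s (k + 1) * s k) := by
            rw [hE.eq]; simp only [mul_assoc]
        _ = s k * (s (k + 1) * eij s e (k + 2) n * s (k + 1)) * s k * s (k + 1) := by
            rw [hbraid]; simp only [mul_assoc]
    · have hsk : Commute (s m) (s k) :=
        hB.commute_s_s hm (by omega) hk (by omega) (by omega)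
      have ih := commute_s_eij hm hmn (by omega) hkn' (by omega) (by omega)
      exact (hsk.mul_right ih).mul_right hsk
  · rw [eij, if_neg (by omega)]
    exact hB.commute_s_e hm (by omega) hk hkn (by omega)
termination_by n - k

theorem s_mul_eij_mul_s {m k : ℕ} (hm : 1 ≤ m) (hmn : m + 2 ≤ n) (hk : 1 ≤ k) (hkn : k + 1 ≤ n) :
    s m * eij s e k n * s m = eij s e (Equiv.swap m (m + 1) k) n := by
  have hss := hB.ss m hm (by omega)
  by_cases hkm : k = m
  · subst hkm
    rw [Equiv.swap_apply_left, hB.eij_eq_s_mul_eij_mul_s hk hmn]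
    simp only [← mul_assoc, hss, one_mul]
    rw [mul_assoc, hss, mul_one]
  by_cases hkm' : k = m + 1
  · subst hkm'
    rw [Equiv.swap_apply_right, hB.eij_eq_s_mul_eij_mul_s hm hmn]
  · rw [Equiv.swap_apply_of_ne_of_ne hkm hkm', (hB.commute_s_eij hm hmn hk hkn hkm hkm').eq,
      mul_assoc, hss, mul_one]

theorem sij_mul_eij_mul_sij {i j k : ℕ} (hi : 1 ≤ i) (hij : i < j) (hjn : j + 1 ≤ n)
    (hk : 1 ≤ k) (hkn : k + 1 ≤ n) :
    sij s i j * eij s e k n * sij s i j = eij s e (Equiv.swap i j k) n := by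
  by_cases h : i + 1 < j
  · set k₁ := Equiv.swap i (i + 1) k
    set k₂ := Equiv.swap (i + 1) j k₁
    have hk₁ : 1 ≤ k₁ ∧ k₁ + 1 ≤ n := by
      simp only [k₁, Equiv.swap_apply_def]; split_ifs <;> omega
    have hk₂ : 1 ≤ k₂ ∧ k₂ + 1 ≤ n := by
      simp only [k₂, Equiv.swap_apply_def]; split_ifs <;> omega
    have hconj : Equiv.swap i (i + 1) k₂ = Equiv.swap i j k := by
      simp only [k₂, k₁, Equiv.swap_apply_def]; split_ifs <;> omega
    calc sij s i j * eij s e k n * sij s i j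
        = s i * (sij s (i + 1) j * (s i * eij s e k n * s i) * sij s (i + 1) j) * s i := by
          simp only [sij_of_lt s h, mul_assoc]
      _ = eij s e (Equiv.swap i j k) n := by
          rw [hB.s_mul_eij_mul_s hi (by omega) hk hkn,
            sij_mul_eij_mul_sij (by omega) h hjn hk₁.1 hk₁.2,
            hB.s_mul_eij_mul_s hi (by omega) hk₂.1 hk₂.2, hconj]
  · obtain rfl : j = i + 1 := by omega
    rw [sij_add_one]
    exact hB.s_mul_eij_mul_s hi (by omega) hk hkn
termination_by j - i

theorem commute_sij_eij {i j k : ℕ} (hi : 1 ≤ i) (hij : i < j) (hjn : j + 1 ≤ n)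
    (hk : 1 ≤ k) (hkn : k + 1 ≤ n) (hki : k ≠ i) (hkj : k ≠ j) :
    Commute (sij s i j) (eij s e k n) := by
  have hconj := hB.sij_mul_eij_mul_sij hi hij hjn hk hkn
  rw [Equiv.swap_apply_of_ne_of_ne hki hkj] at hconj
  calc sij s i j * eij s e k n
      = sij s i j * eij s e k n * sij s i j * sij s i j := by
        rw [mul_assoc _ (sij s i j), hB.sij_mul_self hi hij (by omega), mul_one]
    _ = eij s e k n * sij s i j := by rw [hconj]

theorem eij_mul_s_mul_eij {i : ℕ} (hi : 1 ≤ i) (hin : i + 2 ≤ n) :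
    eij s e (i + 1) n * s i * eij s e (i + 1) n = eij s e (i + 1) n := by
  by_cases h : i + 3 ≤ n
  · have hbraid := hB.braid i hi (by omega)
    have hE : Commute (s i) (eij s e (i + 2) n) :=
      hB.commute_s_eij hi hin (by omega) (by omega) (by omega) (by omega)
    have ih : eij s e (i + 2) n * s (i + 1) * eij s e (i + 2) n = eij s e (i + 2) n :=
      eij_mul_s_mul_eij (by omega) h
    have hss := hB.ss i hi (by omega)
    rw [hB.eij_eq_s_mul_eij_mul_s (by omega : 1 ≤ i + 1) (by omega)]
    set E := eij s e (i + 2) n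
    calc s (i + 1) * E * s (i + 1) * s i * (s (i + 1) * E * s (i + 1))
        = s (i + 1) * E * (s i * s (i + 1) * s i) * E * s (i + 1) := by
          rw [hbraid]; simp only [mul_assoc]
      _ = s (i + 1) * (E * s i) * s (i + 1) * (s i * E) * s (i + 1) := by
          simp only [mul_assoc]
      _ = s (i + 1) * (s i * E) * s (i + 1) * (E * s i) * s (i + 1) := by rw [hE.eq]
      _ = s (i + 1) * s i * (E * s (i + 1) * E) * s i * s (i + 1) := by simp only [mul_assoc]
      _ = s (i + 1) * E * (s i * s i) * s (i + 1) := by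
          rw [ih, mul_assoc (s (i + 1)) (s i) E, hE.eq]; simp only [mul_assoc]
      _ = s (i + 1) * E * s (i + 1) := by rw [hss, mul_one]
  · obtain rfl : n = i + 2 := by omega
    rw [eij_add_one, ← hB.ees i hi le_rfl, mul_assoc _ (s (i + 1)),
      hB.se (i + 1) (by omega) le_rfl, hB.eee₂ i hi le_rfl]
termination_by n - i

theorem eij_mul_sij_mul_eij {i j : ℕ} (hi : 1 ≤ i) (hij : i < j) (hjn : j + 1 ≤ n) :
    eij s e j n * sij s i j * eij s e j n = eij s e j n := by
  by_cases h : i + 1 < j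
  · have hcomm : Commute (s i) (eij s e j n) :=
      hB.commute_s_eij hi (by omega) (by omega) hjn (by omega) (by omega)
    set E := eij s e j n
    calc E * sij s i j * E
        = E * s i * sij s (i + 1) j * (s i * E) := by simp only [sij_of_lt s h, mul_assoc]
      _ = s i * E * sij s (i + 1) j * (E * s i) := by rw [hcomm.eq]
      _ = s i * (E * sij s (i + 1) j * E) * s i := by simp only [mul_assoc]
      _ = E := by
          rw [eij_mul_sij_mul_eij (by omega) h hjn, hcomm.eq, mul_assoc,
            hB.ss i hi (by omega), mul_one]
  · obtain rfl : j = i + 1 := by omega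
    rw [sij_add_one]
    exact hB.eij_mul_s_mul_eij hi (by omega)
termination_by j - i

theorem eij_factors_braid {K : Type*} [Field K] [Algebra K A] {i j : ℕ} (hi : 1 ≤ i)
    (hij : i < j) (hjn : j + 1 ≤ n) {a b c : K} (hac : a + c ≠ 0) (hbc : b + c ≠ 0)
    (hab : a ≠ b) :
    (1 - (a + c)⁻¹ • eij s e i n) * (1 - (b + c)⁻¹ • eij s e j n) * (1 - (a - b)⁻¹ • sij s i j)
      = (1 - (a - b)⁻¹ • sij s i j) * (1 - (b + c)⁻¹ • eij s e j n) *
          (1 - (a + c)⁻¹ • eij s e i n) := by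
  have hconj := hB.sij_mul_eij_mul_sij hi hij hjn (by omega) hjn
  rw [Equiv.swap_apply_right] at hconj
  refine one_sub_smul_braid (hB.sij_mul_self hi hij (by omega)) hconj
    (hB.eij_mul_sij_mul_eij hi hij hjn) ?_
  have hab' : a - b ≠ 0 := sub_ne_zero.mpr hab
  field_simp
  ring

end IsBrauer

theorem e_factors_commute_past_s_product_general
    {K : Type*} [Field K] [Algebra F K] {A : Type*} [Ring A] [Algebra K A]
    (n : ℕ) (s e : ℕ → A) (hB : IsBrauer n (algebraMap F K ωF) s e)
    (u : ℕ → K)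
    (hu : ∀ i j, 1 ≤ i → i < j → j ≤ n → u i + u j ≠ 0 ∧ u i ≠ u j) :
    (((List.range' 1 (n-1)).map fun i =>
      1 - (u i + u n)⁻¹ • eij s e i n).prod) *
    (((lexPairs (n-1)).map fun p => 1 - (u p.1 - u p.2)⁻¹ • sij s p.1 p.2).prod)
    =
    (((lexPairs (n-1)).map fun p => 1 - (u p.1 - u p.2)⁻¹ • sij s p.1 p.2).prod) *
    (((List.range' 1 (n-1)).reverse.map fun i =>
      1 - (u i + u n)⁻¹ • eij s e i n).prod) := by
  rw [lexPairs_eq_orderedPairs]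
  refine prod_mul_prod_orderedPairs (S := {k | 1 ≤ k ∧ k + 1 ≤ n})
    (f := fun k => 1 - (u k + u n)⁻¹ • eij s e k n) (g := fun i j => 1 - (u i - u j)⁻¹ • sij s i j)
    ?_ ?_ (fun k hk => ?_) List.pairwise_lt_range'
  · rintro i ⟨hi, -⟩ j ⟨-, hjn⟩ k ⟨hk, hkn⟩ hij hki hkj
    have hc := ((hB.commute_sij_eij hi hij hjn hk hkn hki hkj).smul_left (u i - u j)⁻¹).smul_right
      (u k + u n)⁻¹
    exact (Commute.one_left _).sub_left ((Commute.one_right _).sub_right hc)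
  · rintro i ⟨hi, -⟩ j ⟨-, hjn⟩ hij
    exact hB.eij_factors_braid hi hij hjn (hu i n hi (by omega) le_rfl).1
      (hu j n (by omega) (by omega) le_rfl).1 (hu i j hi hij (by omega)).2
  · rw [List.mem_range'_1] at hk
    exact ⟨hk.1, by omega⟩

/-- **The commutation identity used in Lemma 3.3.**  For `n ≥ 2`, in
`B_n(ω) ⊗ F(u_1,…,u_n)`,
`(1 - e_{1,n}/(u_1+u_n)) ⋯ (1 - e_{n-1,n}/(u_{n-1}+u_n)) ∏_{1≤i<j≤n-1}(1 - s_{ij}/(u_i-u_j))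
= ∏_{1≤i<j≤n-1}(1 - s_{ij}/(u_i-u_j)) (1 - e_{n-1,n}/(u_{n-1}+u_n)) ⋯ (1 - e_{1,n}/(u_1+u_n))`,
the products over pairs `(i,j)` taken in lexicographic order.  This is stated in any algebra
over a field `K ⊇ ℂ(ω)` with elements `u_1,…,u_n` at which all the denominators are nonzero
(in particular for independent indeterminates `u_1,…,u_n`). -/
theorem e_factors_commute_past_s_product
    {K : Type*} [Field K] [Algebra F K] {A : Type*} [Ring A] [Algebra K A]
    (n : ℕ) (hn : 2 ≤ n) (s e : ℕ → A) (hB : IsBrauer n (algebraMap F K ωF) s e)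
    (u : ℕ → K)
    (hu : ∀ i j, 1 ≤ i → i < j → j ≤ n → u i + u j ≠ 0 ∧ u i ≠ u j) :
    (((List.range' 1 (n-1)).map fun i =>
      1 - (u i + u n)⁻¹ • eij s e i n).prod) *
    (((lexPairs (n-1)).map fun p => 1 - (u p.1 - u p.2)⁻¹ • sij s p.1 p.2).prod)
    =
    (((lexPairs (n-1)).map fun p => 1 - (u p.1 - u p.2)⁻¹ • sij s p.1 p.2).prod) *
    (((List.range' 1 (n-1)).reverse.map fun i =>
      1 - (u i + u n)⁻¹ • eij s e i n).prod) :=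
  e_factors_commute_past_s_product_general n s e hB u hu

end BrauerFusion
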